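/- (Scheme energy estimate for one implicit time step.) Let d ≥ 1, p ∈ (1,∞), s ∈ (0,1), m > 1, Δt > 0, let Ω ⊂ ℝ^d be open and bounded, and let w ∈ W^{s,p}_0(Ω) ∩ L^∞(Ω), h ∈ L^∞(Ω) and v ∈ W^{s,p}_0(Ω) ∩ L^∞(Ω) satisfy, for every φ ∈ W^{s,p}_0(Ω) ∩ L^∞(Ω): (1/Δt)∫_Ω (β(v) − β(w))φ dx + E(v, φ) = ∫_Ω hφ dx. Then (1/Δt)∫_Ω (β(v) − β(w))(v − w) dx + (1/p)[v]_{s,p}^p ≤ ∫_Ω h(v − w) dx + (1/p)[w]_{s,p}^p. -/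

import Mathlib

/-! Test the scheme with `φ = v - w`. Since `|x|^p / p` is convex with derivative
`⟦x⟧^{p-1}`, pointwise `|a|^p/p - |b|^p/p ≤ ⟦a⟧^{p-1}(a - b)`; applied to the difference
quotients `a = v(x) - v(y)`, `b = w(x) - w(y)` and integrated against `|x - y|^{-(d+sp)}`
this gives `E(v, v - w) ≥ ([v]^p - [w]^p) / p`, which turns the tested equation into the
estimate. -/

open MeasureTheory ENNReal

/-- Signed power: `spow r x = |x|^(r-1) * x`. -/
noncomputable def spow (r x : ℝ) : ℝ := |x| ^ (r - 1) * x

/-- Fractional p-Laplacian pairing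
`E(u,φ) = ∫∫ ⟦u(x)−u(y)⟧^{p−1}(φ(x)−φ(y)) |x−y|^{−(d+sp)} dx dy`. -/
noncomputable def fracPairing (d : ℕ) (s p : ℝ)
    (u φ : EuclideanSpace ℝ (Fin d) → ℝ) : ℝ :=
  ∫ z : EuclideanSpace ℝ (Fin d) × EuclideanSpace ℝ (Fin d),
    spow (p - 1) (u z.1 - u z.2) * (φ z.1 - φ z.2) / ‖z.1 - z.2‖ ^ ((d : ℝ) + s * p)

/-- Gagliardo seminorm to the `p`-th power, as an extended nonnegative real. -/
noncomputable def gagliardo (d : ℕ) (s p : ℝ)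
    (u : EuclideanSpace ℝ (Fin d) → ℝ) : ℝ≥0∞ :=
  ∫⁻ z : EuclideanSpace ℝ (Fin d) × EuclideanSpace ℝ (Fin d),
    ENNReal.ofReal (|u z.1 - u z.2| ^ p / ‖z.1 - z.2‖ ^ ((d : ℝ) + s * p))

/-- Membership in `W^{s,p}_0(Ω)`. -/
def memW0 (d : ℕ) (s p : ℝ) (Ω : Set (EuclideanSpace ℝ (Fin d)))
    (u : EuclideanSpace ℝ (Fin d) → ℝ) : Prop :=
  Measurable u ∧ MemLp u (ENNReal.ofReal p) volume ∧
    gagliardo d s p u < ⊤ ∧ ∀ᵐ x, x ∉ Ω → u x = 0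

section SignedPower

lemma measurable_spow (r : ℝ) : Measurable (spow r) := by
  unfold spow
  fun_prop

lemma abs_spow {r : ℝ} (hr : 0 < r) (a : ℝ) : |spow r a| = |a| ^ r := by
  rcases eq_or_ne a 0 with rfl | ha
  · simp [spow, Real.zero_rpow hr.ne']
  · rw [spow, abs_mul, abs_of_nonneg (Real.rpow_nonneg (abs_nonneg a) _),
      ← Real.rpow_add_one (abs_ne_zero.2 ha), sub_add_cancel]

lemma spow_mul_self {r : ℝ} (hr : 0 < r) (a : ℝ) : spow r a * a = |a| ^ (r + 1) := by
  have hnonneg : 0 ≤ spow r a * a := by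
    rw [spow, mul_assoc]
    exact mul_nonneg (Real.rpow_nonneg (abs_nonneg a) _) (mul_self_nonneg a)
  rw [Real.rpow_add_one' (abs_nonneg a) (ne_of_gt (by linarith)), ← abs_spow hr, ← abs_mul,
    abs_of_nonneg hnonneg]

lemma abs_spow_mul_le {r : ℝ} (hr : 0 < r) (a b : ℝ) : spow r a * b ≤ |a| ^ r * |b| :=
  calc spow r a * b ≤ |spow r a * b| := le_abs_self _
  _ = |a| ^ r * |b| := by rw [abs_mul, abs_spow hr]

end SignedPower

section RpowInequalities

variable {p : ℝ}

lemma rpow_sub_one_mul_le {a b : ℝ} (hp : 1 < p) (ha : 0 ≤ a) (hb : 0 ≤ b) :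
    a ^ (p - 1) * b ≤ (1 - 1 / p) * a ^ p + b ^ p / p := by
  have hpq : (p / (p - 1)).HolderConjugate p := (Real.HolderConjugate.conjExponent hp).symm
  have hpow : (a ^ (p - 1)) ^ (p / (p - 1)) = a ^ p := by
    rw [← Real.rpow_mul ha, mul_div_cancel₀ _ (by linarith : p - 1 ≠ 0)]
  have hcoef : a ^ p / (p / (p - 1)) = (1 - 1 / p) * a ^ p := by
    field_simp
  simpa [hpow, hcoef] using
    Real.young_inequality_of_nonneg (Real.rpow_nonneg ha (p - 1)) hb hpq

lemma abs_rpow_div_sub_le_spow_mul_sub (hp : 1 < p) (a b : ℝ) :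
    |a| ^ p / p - |b| ^ p / p ≤ spow (p - 1) a * (a - b) := by
  have hself : spow (p - 1) a * a = |a| ^ p := by
    rw [spow_mul_self (by linarith), sub_add_cancel]
  have hcross := abs_spow_mul_le (by linarith : 0 < p - 1) a b
  have hyoung := rpow_sub_one_mul_le hp (abs_nonneg a) (abs_nonneg b)
  rw [mul_sub, hself]
  have hsplit : (1 - 1 / p) * |a| ^ p = |a| ^ p - |a| ^ p / p := by ring
  linarith

lemma abs_spow_mul_sub_le (hp : 1 < p) (a b : ℝ) :
    |spow (p - 1) a * (a - b)| ≤ 2 * |a| ^ p + |b| ^ p := by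
  have hp0 : 0 < p := by linarith
  have hyoung := rpow_sub_one_mul_le hp (abs_nonneg a) (abs_nonneg b)
  have hAp : 0 ≤ |a| ^ p := Real.rpow_nonneg (abs_nonneg a) p
  have hBp : 0 ≤ |b| ^ p := Real.rpow_nonneg (abs_nonneg b) p
  have hcoef : (1 - 1 / p) * |a| ^ p ≤ |a| ^ p :=
    mul_le_of_le_one_left hAp (by simp [hp0.le])
  have hdiv : |b| ^ p / p ≤ |b| ^ p := div_le_self hBp hp.le
  calc |spow (p - 1) a * (a - b)| = |a| ^ (p - 1) * |a - b| := by
        rw [abs_mul, abs_spow (by linarith)]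
  _ ≤ |a| ^ (p - 1) * (|a| + |b|) :=
        mul_le_mul_of_nonneg_left (abs_sub _ _) (Real.rpow_nonneg (abs_nonneg a) _)
  _ = |a| ^ p + |a| ^ (p - 1) * |b| := by
        rw [mul_add, ← Real.rpow_add_one' (abs_nonneg a) (ne_of_gt (by linarith)), sub_add_cancel]
  _ ≤ 2 * |a| ^ p + |b| ^ p := by linarith

lemma abs_sub_rpow_le (hp : 1 ≤ p) (a b : ℝ) :
    |a - b| ^ p ≤ 2 ^ (p - 1) * (|a| ^ p + |b| ^ p) :=
  calc |a - b| ^ p ≤ (|a| + |b|) ^ p :=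
        Real.rpow_le_rpow (abs_nonneg _) (abs_sub a b) (by linarith)
  _ ≤ 2 ^ (p - 1) * (|a| ^ p + |b| ^ p) := by
        exact_mod_cast NNReal.rpow_add_le_mul_rpow_add_rpow ⟨|a|, abs_nonneg a⟩
          ⟨|b|, abs_nonneg b⟩ hp

end RpowInequalities

section WeightedIntegral

variable {α : Type*} [MeasurableSpace α] {μ : Measure α} {p : ℝ} {V W K : α → ℝ}

lemma integrable_spow_mul_sub_div (hp : 1 < p) (hV : Measurable V) (hW : Measurable W)
    (hK : Measurable K) (hK0 : ∀ z, 0 ≤ K z)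
    (hVi : Integrable (fun z => |V z| ^ p / K z) μ)
    (hWi : Integrable (fun z => |W z| ^ p / K z) μ) :
    Integrable (fun z => spow (p - 1) (V z) * (V z - W z) / K z) μ := by
  refine ((hVi.const_mul 2).add hWi).mono'
    ((((measurable_spow _).comp hV).mul (hV.sub hW)).div hK).aestronglyMeasurable
    (ae_of_all _ fun z => ?_)
  rw [Pi.add_apply, Real.norm_eq_abs, abs_div, abs_of_nonneg (hK0 z), mul_div_assoc', ← add_div]
  exact div_le_div_of_nonneg_right (abs_spow_mul_sub_le hp _ _) (hK0 z)

lemma integral_sub_div_le_integral_spow_mul_sub_div (hp : 1 < p) (hV : Measurable V)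
    (hW : Measurable W) (hK : Measurable K) (hK0 : ∀ z, 0 ≤ K z)
    (hVi : Integrable (fun z => |V z| ^ p / K z) μ)
    (hWi : Integrable (fun z => |W z| ^ p / K z) μ) :
    ((∫ z, |V z| ^ p / K z ∂μ) - ∫ z, |W z| ^ p / K z ∂μ) / p ≤
      ∫ z, spow (p - 1) (V z) * (V z - W z) / K z ∂μ := by
  rw [← integral_sub hVi hWi, ← integral_div]
  refine integral_mono ((hVi.sub hWi).div_const p)
    (integrable_spow_mul_sub_div hp hV hW hK hK0 hVi hWi) fun z => ?_
  calc (|V z| ^ p / K z - |W z| ^ p / K z) / p = (|V z| ^ p / p - |W z| ^ p / p) / K z := by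
        ring
  _ ≤ spow (p - 1) (V z) * (V z - W z) / K z :=
        div_le_div_of_nonneg_right (abs_rpow_div_sub_le_spow_mul_sub hp _ _) (hK0 z)

end WeightedIntegral

section Gagliardo

variable {d : ℕ} {s p : ℝ} {u v : EuclideanSpace ℝ (Fin d) → ℝ}

lemma measurable_gagliardo_integrand (hu : Measurable u) :
    Measurable fun z : EuclideanSpace ℝ (Fin d) × EuclideanSpace ℝ (Fin d) =>
      |u z.1 - u z.2| ^ p / ‖z.1 - z.2‖ ^ ((d : ℝ) + s * p) := by
  fun_prop

lemma gagliardo_integrand_nonneg (u : EuclideanSpace ℝ (Fin d) → ℝ)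
    (z : EuclideanSpace ℝ (Fin d) × EuclideanSpace ℝ (Fin d)) :
    0 ≤ |u z.1 - u z.2| ^ p / ‖z.1 - z.2‖ ^ ((d : ℝ) + s * p) := by
  positivity

lemma gagliardo_lt_top_iff_integrable (hu : Measurable u) :
    gagliardo d s p u < ⊤ ↔
      Integrable fun z : EuclideanSpace ℝ (Fin d) × EuclideanSpace ℝ (Fin d) =>
        |u z.1 - u z.2| ^ p / ‖z.1 - z.2‖ ^ ((d : ℝ) + s * p) := by
  rw [Integrable, hasFiniteIntegral_iff_ofReal (ae_of_all _ (gagliardo_integrand_nonneg u))]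
  exact ⟨fun h => ⟨(measurable_gagliardo_integrand hu).aestronglyMeasurable, h⟩, And.right⟩

lemma gagliardo_toReal_eq_integral (hu : Measurable u) :
    (gagliardo d s p u).toReal =
      ∫ z : EuclideanSpace ℝ (Fin d) × EuclideanSpace ℝ (Fin d),
        |u z.1 - u z.2| ^ p / ‖z.1 - z.2‖ ^ ((d : ℝ) + s * p) := by
  rw [integral_eq_lintegral_of_nonneg_ae (ae_of_all _ (gagliardo_integrand_nonneg u))
    (measurable_gagliardo_integrand hu).aestronglyMeasurable]
  rfl

lemma gagliardo_sub_lt_top (hp : 1 ≤ p) (hu : Measurable u) (hv : Measurable v)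
    (hu' : gagliardo d s p u < ⊤) (hv' : gagliardo d s p v < ⊤) :
    gagliardo d s p (fun x => u x - v x) < ⊤ := by
  rw [gagliardo_lt_top_iff_integrable hu] at hu'
  rw [gagliardo_lt_top_iff_integrable hv] at hv'
  rw [gagliardo_lt_top_iff_integrable (u := fun x => u x - v x) (hu.sub hv)]
  refine ((hu'.add hv').const_mul (2 ^ (p - 1))).mono'
    (measurable_gagliardo_integrand (hu.sub hv)).aestronglyMeasurable (ae_of_all _ fun z => ?_)
  rw [Real.norm_of_nonneg (by positivity), Pi.add_apply,
    ← add_div, mul_div_assoc', sub_sub_sub_comm]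
  exact div_le_div_of_nonneg_right (abs_sub_rpow_le hp _ _) (by positivity)

lemma sub_div_le_fracPairing_sub (hp : 1 < p) (hu : Measurable u) (hv : Measurable v)
    (hu' : gagliardo d s p u < ⊤) (hv' : gagliardo d s p v < ⊤) :
    ((gagliardo d s p u).toReal - (gagliardo d s p v).toReal) / p ≤
      fracPairing d s p u (fun x => u x - v x) := by
  rw [gagliardo_toReal_eq_integral hu, gagliardo_toReal_eq_integral hv, fracPairing]
  refine (integral_sub_div_le_integral_spow_mul_sub_div hp (by fun_prop) (by fun_prop)
    (by fun_prop) (fun z => by positivity) ((gagliardo_lt_top_iff_integrable hu).1 hu')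
    ((gagliardo_lt_top_iff_integrable hv).1 hv')).trans_eq
    (integral_congr_ae (ae_of_all _ fun z => ?_))
  dsimp only
  rw [sub_sub_sub_comm]

end Gagliardo

theorem memW0.sub {d : ℕ} {s p : ℝ} {Ω : Set (EuclideanSpace ℝ (Fin d))}
    {u v : EuclideanSpace ℝ (Fin d) → ℝ} (hp : 1 ≤ p) (hu : memW0 d s p Ω u)
    (hv : memW0 d s p Ω v) : memW0 d s p Ω (fun x => u x - v x) := by
  obtain ⟨hum, huLp, hug, hu0⟩ := hu
  obtain ⟨hvm, hvLp, hvg, hv0⟩ := hv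
  refine ⟨hum.sub hvm, huLp.sub hvLp, gagliardo_sub_lt_top hp hum hvm hug hvg, ?_⟩
  filter_upwards [hu0, hv0] with x hux hvx hx
  rw [hux hx, hvx hx, sub_zero]

theorem stmt15_general (d : ℕ) (p s m : ℝ) (hp : 1 < p)
    (Δt : ℝ)
    (Ω : Set (EuclideanSpace ℝ (Fin d)))
    (w h v : EuclideanSpace ℝ (Fin d) → ℝ)
    (hw : memW0 d s p Ω w) (hwB : MemLp w ⊤ (volume.restrict Ω))
    (hv : memW0 d s p Ω v) (hvB : MemLp v ⊤ (volume.restrict Ω))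
    (heq : ∀ φ : EuclideanSpace ℝ (Fin d) → ℝ,
      memW0 d s p Ω φ → MemLp φ ⊤ (volume.restrict Ω) →
      (1 / Δt) * (∫ x in Ω, (spow m⁻¹ (v x) - spow m⁻¹ (w x)) * φ x) +
        fracPairing d s p v φ = ∫ x in Ω, h x * φ x) :
    (1 / Δt) * (∫ x in Ω, (spow m⁻¹ (v x) - spow m⁻¹ (w x)) * (v x - w x)) +
        (1 / p) * (gagliardo d s p v).toReal ≤
      (∫ x in Ω, h x * (v x - w x)) + (1 / p) * (gagliardo d s p w).toReal := by
  have htested := heq _ (hv.sub hp.le hw) (hvB.sub hwB)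
  have henergy := sub_div_le_fracPairing_sub hp hv.1 hw.1 hv.2.2.1 hw.2.2.1
  rw [div_eq_mul_one_div, mul_comm, mul_sub] at henergy
  linarith

/-- scheme energy estimate for one implicit time step. If `v` solves
`(1/Δt)β(v) + (−Δ)^s_p v = h + (1/Δt)β(w)` weakly, then
`(1/Δt)∫_Ω (β(v) − β(w))(v − w) + (1/p)[v]^p ≤ ∫_Ω h(v − w) + (1/p)[w]^p`. -/
theorem stmt15 (d : ℕ) (hd : 1 ≤ d) (p s m : ℝ) (hp : 1 < p)
    (hs : s ∈ Set.Ioo (0 : ℝ) 1) (hm : 1 < m)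
    (Δt : ℝ) (hΔt : 0 < Δt)
    (Ω : Set (EuclideanSpace ℝ (Fin d))) (hΩo : IsOpen Ω) (hΩb : Bornology.IsBounded Ω)
    (w h v : EuclideanSpace ℝ (Fin d) → ℝ)
    (hw : memW0 d s p Ω w) (hwB : MemLp w ⊤ (volume.restrict Ω))
    (hh : MemLp h ⊤ (volume.restrict Ω))
    (hv : memW0 d s p Ω v) (hvB : MemLp v ⊤ (volume.restrict Ω))
    (heq : ∀ φ : EuclideanSpace ℝ (Fin d) → ℝ,
      memW0 d s p Ω φ → MemLp φ ⊤ (volume.restrict Ω) →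
      (1 / Δt) * (∫ x in Ω, (spow m⁻¹ (v x) - spow m⁻¹ (w x)) * φ x) +
        fracPairing d s p v φ = ∫ x in Ω, h x * φ x) :
    (1 / Δt) * (∫ x in Ω, (spow m⁻¹ (v x) - spow m⁻¹ (w x)) * (v x - w x)) +
        (1 / p) * (gagliardo d s p v).toReal ≤
      (∫ x in Ω, h x * (v x - w x)) + (1 / p) * (gagliardo d s p w).toReal :=
  stmt15_general d p s m hp Δt Ω w h v hw hwB hv hvB heq
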